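/- arXiv:1103.3889 — 2 statements merged into one kernel-verified Lean document; each statement's English description precedes it below -/
import Mathlib

section
/- Let ν, λ₁, C > 0 and let z : ℝ → ℝ₊ be continuous such that there exist ρ > 0 with z(t) ≤ ρ(1 + |t|^{1/2}) for all t ∈ ℝ, and t₀ ≥ 0 such that ∫_{-t}^{-t₀} (-νλ₁ + (3C²/ν) z(s)²) ds ≤ -(νλ₁/2)(t - t₀) for all t ≥ t₀. Then ∫_{-∞}^0 (1 + z(t)² + z(t)⁴) · exp(νλ₁ t + (3C²/ν)∫_t^0 z(s)² ds) dt < ∞. -/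
open Filter Topology MeasureTheory intervalIntegral Real Set

/-! For `t ≤ -t₀` the ergodic estimate bounds the exponent by `νλ₁ t / 2 + K`, while the
sublinear growth of `z` makes the prefactor `1 + z² + z⁴` at most quadratic in `|t|`. Half of
the remaining exponential decay absorbs that quadratic, so the integrand is `O(exp (νλ₁ t / 4))`
on the tail `(-∞, -t₀]`; on the compact rest it is continuous. -/

theorem continuous_intervalIntegral_left {g : ℝ → ℝ} (hg : Continuous g) (b : ℝ) :
    Continuous fun t => ∫ s in t..b, g s :=
  (continuous_primitive (fun _ _ => hg.intervalIntegrable _ _) b).neg.congr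
    fun t => (integral_symm b t).symm

theorem integrableOn_Iic_of_le_mul_exp {f : ℝ → ℝ} (hf : Continuous f) {a b δ M : ℝ}
    (hδ : 0 < δ) (hle : ∀ t ≤ a, ‖f t‖ ≤ M * exp (δ * t)) :
    IntegrableOn f (Iic b) := by
  have htail : IntegrableOn f (Iic a) :=
    ((integrableOn_exp_mul_Iic hδ a).const_mul M).mono' hf.aestronglyMeasurable.restrict
      (ae_restrict_of_forall_mem measurableSet_Iic hle)
  refine (htail.union (hf.integrableOn_Icc (a := a) (b := b))).mono_set fun t ht => ?_
  rcases le_total t a with hta | hta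
  · exact Or.inl hta
  · exact Or.inr ⟨hta, ht⟩

theorem sq_one_add_le_mul_exp {δ x : ℝ} (hδ : 0 < δ) (hx : 0 ≤ x) :
    (1 + x) ^ 2 ≤ 2 * exp δ / δ ^ 2 * exp (δ * x) := by
  have h := pow_div_factorial_le_exp (δ * (1 + x)) (by positivity) 2
  rw [mul_add, mul_one, exp_add, Nat.factorial_two, Nat.cast_two, div_le_iff₀ two_pos] at h
  rw [div_mul_eq_mul_div, le_div_iff₀ (by positivity)]
  nlinarith

theorem one_add_sq_add_pow_four_le {x ρ s : ℝ} (hx : 0 ≤ x) (hs : 0 ≤ s)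
    (hxs : x ≤ ρ * (1 + √s)) :
    1 + x ^ 2 + x ^ 4 ≤ (1 + 2 * ρ ^ 2 + 4 * ρ ^ 4) * (1 + s) ^ 2 := by
  have hsq : (1 + √s) ^ 2 ≤ 2 * (1 + s) := by
    nlinarith [sq_nonneg (1 - √s), sq_sqrt hs]
  have hx2 : x ^ 2 ≤ 2 * ρ ^ 2 * (1 + s) := by
    calc x ^ 2 ≤ (ρ * (1 + √s)) ^ 2 := pow_le_pow_left₀ hx hxs 2
      _ = ρ ^ 2 * (1 + √s) ^ 2 := by ring
      _ ≤ 2 * ρ ^ 2 * (1 + s) := by nlinarith [sq_nonneg ρ]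
  have hx4 : x ^ 4 ≤ 4 * ρ ^ 4 * (1 + s) ^ 2 := by
    calc x ^ 4 = (x ^ 2) ^ 2 := by ring
      _ ≤ (2 * ρ ^ 2 * (1 + s)) ^ 2 := pow_le_pow_left₀ (sq_nonneg x) hx2 2
      _ = 4 * ρ ^ 4 * (1 + s) ^ 2 := by ring
  nlinarith [sq_nonneg ρ]

theorem integrableOn_Iic_of_le_sq_mul_exp {f : ℝ → ℝ} (hf : Continuous f) {a b A κ : ℝ}
    (hA : 0 ≤ A) (hκ : 0 < κ) (hle : ∀ t ≤ a, ‖f t‖ ≤ A * (1 + |t|) ^ 2 * exp (κ * t)) :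
    IntegrableOn f (Iic b) := by
  refine integrableOn_Iic_of_le_mul_exp hf (a := min a 0) (half_pos hκ)
    (M := A * (2 * exp (κ / 2) / (κ / 2) ^ 2)) fun t ht => ?_
  have ht0 : t ≤ 0 := ht.trans (min_le_right a 0)
  have hpoly := sq_one_add_le_mul_exp (half_pos hκ) (neg_nonneg.mpr ht0)
  calc ‖f t‖ ≤ A * (1 + |t|) ^ 2 * exp (κ * t) := hle t (ht.trans (min_le_left a 0))
    _ ≤ A * (2 * exp (κ / 2) / (κ / 2) ^ 2 * exp (κ / 2 * -t)) * exp (κ * t) := by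
      rw [abs_of_nonpos ht0]; gcongr
    _ = A * (2 * exp (κ / 2) / (κ / 2) ^ 2) * exp (κ / 2 * t) := by
      rw [mul_assoc, mul_assoc, mul_assoc, ← exp_add]; ring_nf

theorem add_integral_le_of_forall_integral_le {g : ℝ → ℝ} (hg : Continuous g) {κ t₀ : ℝ}
    (h : ∀ t ≥ t₀, ∫ s in (-t)..(-t₀), (-κ + g s) ≤ -(κ / 2) * (t - t₀))
    {t : ℝ} (ht : t ≤ -t₀) :
    κ * t + ∫ s in t..0, g s ≤ κ / 2 * t + ((∫ s in (-t₀)..0, g s) - κ / 2 * t₀) := by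
  have hg' : ∀ a b : ℝ, IntervalIntegrable g volume a b := fun _ _ => hg.intervalIntegrable _ _
  have hbound := h (-t) (by linarith)
  rw [neg_neg, integral_add intervalIntegrable_const (hg' _ _), intervalIntegral.integral_const,
    smul_eq_mul] at hbound
  rw [← integral_add_adjacent_intervals (hg' t (-t₀)) (hg' _ _)]
  linarith

theorem stmt_8_general (ν lam C : ℝ) (hν : 0 < ν) (hlam : 0 < lam)
    (z : ℝ → ℝ) (hz : Continuous z) (hz0 : ∀ t, 0 ≤ z t)
    (ρ : ℝ) (hsub : ∀ t : ℝ, z t ≤ ρ * (1 + |t| ^ ((1:ℝ)/2)))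
    (t₀ : ℝ)
    (herg : ∀ t ≥ t₀, ∫ s in (-t)..(-t₀), (-(ν * lam) + (3 * C ^ 2 / ν) * (z s) ^ 2)
      ≤ -(ν * lam / 2) * (t - t₀)) :
    IntegrableOn
      (fun t => (1 + (z t) ^ 2 + (z t) ^ 4) *
        Real.exp (ν * lam * t + (3 * C ^ 2 / ν) * ∫ s in t..(0:ℝ), (z s) ^ 2))
      (Set.Iic (0:ℝ)) := by
  set c := 3 * C ^ 2 / ν
  have hg : Continuous fun s => c * z s ^ 2 := by fun_prop
  set K := (∫ s in (-t₀)..0, c * z s ^ 2) - ν * lam / 2 * t₀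
  refine integrableOn_Iic_of_le_sq_mul_exp (a := -t₀) (A := (1 + 2 * ρ ^ 2 + 4 * ρ ^ 4) * exp K)
    ?_ (by positivity) (half_pos (mul_pos hν hlam)) fun t ht => ?_
  · have hint := continuous_intervalIntegral_left (hz.pow 2) 0
    fun_prop
  have hpoly := one_add_sq_add_pow_four_le (hz0 t) (abs_nonneg t)
    (by rw [sqrt_eq_rpow]; exact hsub t)
  have hexp := add_integral_le_of_forall_integral_le hg herg ht
  rw [intervalIntegral.integral_const_mul] at hexp
  rw [norm_of_nonneg (by positivity)]
  calc _ ≤ (1 + 2 * ρ ^ 2 + 4 * ρ ^ 4) * (1 + |t|) ^ 2 * exp (ν * lam / 2 * t + K) := by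
        gcongr
    _ = _ := by rw [exp_add]; ring

/-- Lemma 8.6. Under sublinear growth `z(t) ≤ ρ(1+|t|^{1/2})` and the
ergodic-type estimate `∫_{-t}^{-t₀}(-νλ₁ + (3C²/ν)z(s)²) ds ≤ -(νλ₁/2)(t-t₀)` for
`t ≥ t₀`, the function `(1 + z² + z⁴)·exp(νλ₁ t + (3C²/ν)∫_t^0 z(s)² ds)` is integrable
on `(-∞, 0]`. -/
theorem stmt_8 (ν lam C : ℝ) (hν : 0 < ν) (hlam : 0 < lam) (hC : 0 < C)
    (z : ℝ → ℝ) (hz : Continuous z) (hz0 : ∀ t, 0 ≤ z t)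
    (ρ : ℝ) (hρ : 0 < ρ) (hsub : ∀ t : ℝ, z t ≤ ρ * (1 + |t| ^ ((1:ℝ)/2)))
    (t₀ : ℝ) (ht₀ : 0 ≤ t₀)
    (herg : ∀ t ≥ t₀, ∫ s in (-t)..(-t₀), (-(ν * lam) + (3 * C ^ 2 / ν) * (z s) ^ 2)
      ≤ -(ν * lam / 2) * (t - t₀)) :
    IntegrableOn
      (fun t => (1 + (z t) ^ 2 + (z t) ^ 4) *
        Real.exp (ν * lam * t + (3 * C ^ 2 / ν) * ∫ s in t..(0:ℝ), (z s) ^ 2))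
      (Set.Iic (0:ℝ)) :=
  stmt_8_general ν lam C hν hlam z hz hz0 ρ hsub t₀ herg
end

section
/- Let ν, λ₁, C > 0 and z : ℝ → ℝ₊ continuous with z(t) ≤ ρ(1+|t|^{1/2}) and satisfying ∫_{-t}^{-t₀}(-νλ₁ + (3C²/ν) z(s)²) ds ≤ -(νλ₁/2)(t-t₀) for t ≥ t₀. Then lim_{t→-∞} z(t)² · exp(νλ₁ t + (3C²/ν) ∫_t^0 z(s)² ds) = 0. -/
/-!
For `t ≤ -t₀` the ergodic estimate, applied on `[t, -t₀]`, bounds the exponent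
`νλ₁ t + (3C²/ν) ∫_t^0 z²` by `(νλ₁/2) t` plus a constant. The sublinear growth makes `z(t)²`
grow at most like `1 + |t|`, which the remaining factor `exp ((νλ₁/2) t)` kills as `t → -∞`.
-/

open Filter Topology MeasureTheory intervalIntegral

lemma tendsto_one_add_abs_rpow_sq_mul_exp_atBot (s : ℝ) {a : ℝ} (ha : 0 < a) :
    Tendsto (fun t : ℝ => (1 + |t| ^ s) ^ 2 * Real.exp (a * t)) atBot (𝓝 0) := by
  have hdecay : ∀ r : ℝ, Tendsto (fun u : ℝ => u ^ r * Real.exp (-a * u)) atTop (𝓝 0) :=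
    fun r => tendsto_rpow_mul_exp_neg_mul_atTop_nhds_zero r a ha
  have hsum := ((hdecay 0).add ((hdecay s).const_mul 2)).add (hdecay (2 * s))
  rw [mul_zero, add_zero, add_zero] at hsum
  refine (hsum.comp tendsto_neg_atBot_atTop).congr' ?_
  filter_upwards [eventually_le_atBot 0] with t ht
  have habs : |t| = -t := abs_of_nonpos ht
  have hsq : (|t| ^ s) ^ 2 = |t| ^ (2 * s) := by
    rw [← Real.rpow_natCast, ← Real.rpow_mul (abs_nonneg t), mul_comm]
    norm_num
  simp only [Function.comp_apply, Real.rpow_zero]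
  rw [← habs, show a * t = -a * |t| by rw [habs]; ring, add_sq, hsq]
  ring

/-- The exponent at `t ≤ -t₀` exceeds its value at `-t₀` by `∫_t^{-t₀} (-c + K g)`. -/
lemma linear_add_integral_le_of_integral_le {g : ℝ → ℝ} (hg : Continuous g) {c K t₀ : ℝ}
    (herg : ∀ t ≥ t₀, ∫ s in (-t)..(-t₀), (-c + K * g s) ≤ -(c / 2) * (t - t₀))
    {t : ℝ} (ht : t ≤ -t₀) :
    c * t + K * ∫ s in t..0, g s ≤ c / 2 * (t - t₀) + K * ∫ s in (-t₀)..0, g s := by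
  have hgi : ∀ p q : ℝ, IntervalIntegrable g volume p q := fun p q => hg.intervalIntegrable p q
  have hbound := herg (-t) (by linarith)
  rw [neg_neg, integral_add intervalIntegrable_const ((hgi _ _).const_mul K),
    intervalIntegral.integral_const, intervalIntegral.integral_const_mul, smul_eq_mul] at hbound
  rw [← integral_add_adjacent_intervals (hgi t (-t₀)) (hgi (-t₀) 0)]
  linear_combination hbound

theorem stmt_9_general (ν lam C : ℝ) (hν : 0 < ν) (hlam : 0 < lam)
    (z : ℝ → ℝ) (hz : Continuous z) (hz0 : ∀ t, 0 ≤ z t)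
    (ρ : ℝ) (hsub : ∀ t : ℝ, z t ≤ ρ * (1 + |t| ^ ((1:ℝ)/2)))
    (t₀ : ℝ)
    (herg : ∀ t ≥ t₀, ∫ s in (-t)..(-t₀), (-(ν * lam) + (3 * C ^ 2 / ν) * (z s) ^ 2)
      ≤ -(ν * lam / 2) * (t - t₀)) :
    Tendsto
      (fun t => (z t) ^ 2 *
        Real.exp (ν * lam * t + (3 * C ^ 2 / ν) * ∫ s in t..(0:ℝ), (z s) ^ 2))
      atBot (𝓝 0) := by
  set B := -(ν * lam / 2 * t₀) + 3 * C ^ 2 / ν * ∫ s in (-t₀)..0, z s ^ 2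
  have hupper := (tendsto_one_add_abs_rpow_sq_mul_exp_atBot ((1:ℝ)/2)
    (by positivity : 0 < ν * lam / 2)).const_mul (ρ ^ 2 * Real.exp B)
  rw [mul_zero] at hupper
  refine tendsto_of_tendsto_of_tendsto_of_le_of_le' tendsto_const_nhds hupper
    (Eventually.of_forall fun t => by positivity) ?_
  filter_upwards [eventually_le_atBot (-t₀)] with t ht
  have hzsq : z t ^ 2 ≤ (ρ * (1 + |t| ^ ((1:ℝ)/2))) ^ 2 := pow_le_pow_left₀ (hz0 t) (hsub t) 2
  have hexp := Real.exp_le_exp.mpr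
    (linear_add_integral_le_of_integral_le (hz.pow 2) herg ht)
  calc _ ≤ (ρ * (1 + |t| ^ ((1:ℝ)/2))) ^ 2 * Real.exp (ν * lam / 2 * t + B) := by
        rw [mul_sub, sub_eq_add_neg, add_assoc] at hexp
        exact mul_le_mul hzsq hexp (Real.exp_pos _).le (sq_nonneg _)
    _ = _ := by rw [Real.exp_add]; ring

/-- Lemma 8.5. Under sublinear growth of `z` and the ergodic-type
estimate, `z(t)²·exp(νλ₁ t + (3C²/ν)∫_t^0 z(s)² ds) → 0` as `t → -∞`. -/
theorem stmt_9 (ν lam C : ℝ) (hν : 0 < ν) (hlam : 0 < lam) (hC : 0 < C)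
    (z : ℝ → ℝ) (hz : Continuous z) (hz0 : ∀ t, 0 ≤ z t)
    (ρ : ℝ) (hρ : 0 < ρ) (hsub : ∀ t : ℝ, z t ≤ ρ * (1 + |t| ^ ((1:ℝ)/2)))
    (t₀ : ℝ) (ht₀ : 0 ≤ t₀)
    (herg : ∀ t ≥ t₀, ∫ s in (-t)..(-t₀), (-(ν * lam) + (3 * C ^ 2 / ν) * (z s) ^ 2)
      ≤ -(ν * lam / 2) * (t - t₀)) :
    Tendsto
      (fun t => (z t) ^ 2 *
        Real.exp (ν * lam * t + (3 * C ^ 2 / ν) * ∫ s in t..(0:ℝ), (z s) ^ 2))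
      atBot (𝓝 0) :=
  stmt_9_general ν lam C hν hlam z hz hz0 ρ hsub t₀ herg
end
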